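/- arXiv:2304.13602 — 3 statements merged into one kernel-verified Lean document; each statement's English description precedes it below -/
import Mathlib

section
/- Let u ≥ 0 and n = 4u+3. The ℤ-lattice ℤ·1 + ℤ·b + ℤ·b* inside the asymmetric rank-3 table algebra over ℚ equals the ℤ-span of {n·e₀, e₀ + e₁, (2u+1)·e₀ + b·e₁}, where e₀ = (1/n)(1+b+b*) and e₁ = 1 - e₀. Consequently the index of ℤ·1 + ℤ·b + ℤ·b* in the lattice ℤ·e₀ + ℤ·e₁ + ℤ·(b·e₁) is n. -/
/-!
Summing the relations for `b²` and `b·b*` gives `b·(1+b+b*) = (2u+1)(1+b+b*)`, i.e.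
`b·e₀ = (2u+1)e₀`. Hence `n·e₀ = 1+b+b*`, `e₀ + e₁ = 1` and `(2u+1)e₀ + b·e₁ = b`, so
`ℤ1+ℤb+ℤb* = ℤ(n·e₀)+ℤ1+ℤb` and `ℤe₀+ℤe₁+ℤ(b·e₁) = ℤe₀+ℤ1+ℤb`. No nonzero multiple of `e₀`
lies in `ℤ1+ℤb`, because its `b*`-coordinate does not vanish, so the quotient is `ℤ/nℤ`.
-/

open Submodule

theorem Submodule.natCard_quotient_span_insert_zsmul {M : Type*} [AddCommGroup M]
    {x : M} {s : Set M} (hx : ∀ k : ℤ, k • x ∈ span ℤ s → k = 0) (n : ℤ) :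
    Nat.card (span ℤ (insert x s) ⧸
      (span ℤ (insert (n • x) s)).comap (span ℤ (insert x s)).subtype) = n.natAbs := by
  set P := span ℤ (insert x s)
  set Q := (span ℤ (insert (n • x) s)).comap P.subtype
  have hxP : x ∈ P := subset_span (Set.mem_insert x s)
  set f : ℤ →ₗ[ℤ] P ⧸ Q := Q.mkQ ∘ₗ LinearMap.toSpanSingleton ℤ P ⟨x, hxP⟩
  have hf : Function.Surjective f := by
    rintro ⟨p, hp⟩
    obtain ⟨a, z, hz, rfl⟩ := mem_span_insert.mp hp
    refine ⟨a, (Quotient.eq Q).mpr ?_⟩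
    simpa [Q] using neg_mem (span_mono (Set.subset_insert _ s) hz)
  have hker : LinearMap.ker f = Ideal.span {n} := by
    ext k
    simp only [LinearMap.mem_ker, f, LinearMap.comp_apply, mkQ_apply, Quotient.mk_eq_zero,
      LinearMap.toSpanSingleton_apply, Q, mem_comap, subtype_apply, SetLike.val_smul,
      mem_span_insert, Ideal.mem_span_singleton]
    constructor
    · rintro ⟨a, z, hz, hkz⟩
      have : k - a * n = 0 := hx _ (by rwa [sub_smul, mul_smul, hkz, add_sub_cancel_left])
      exact ⟨a, by linarith⟩
    · rintro ⟨c, rfl⟩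
      exact ⟨c, 0, zero_mem _, by rw [add_zero, smul_smul, mul_comm]⟩
  rw [Nat.card_congr ((f.quotKerEquivOfSurjective hf).symm.toEquiv.trans
    ((Submodule.quotEquivOfEq _ _ hker).toEquiv.trans (Int.quotientSpanEquivZMod n).toEquiv)),
    Nat.card_zmod]

theorem Submodule.mem_span_triple_of_eq {R M : Type*} [Ring R] [AddCommGroup M]
    [Module R M] {x y z w : M} (a b c : R) (h : a • x + b • y + c • z = w) :
    w ∈ span R {x, y, z} :=
  h ▸ add_mem (add_mem (smul_mem _ a (subset_span (by simp)))
    (smul_mem _ b (subset_span (by simp)))) (smul_mem _ c (subset_span (by simp)))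

theorem LinearIndependent.eq_zero_of_zsmul_mem_span_pair {M : Type*} [AddCommGroup M]
    [Module ℚ M] {x y z e : M} (hli : LinearIndependent ℚ ![x, y, z]) {m k : ℤ}
    (he : m • e = x + y + z) (hk : k • e ∈ span ℤ {x, y}) : k = 0 := by
  obtain ⟨c, d, hcd⟩ := mem_span_pair.mp hk
  have hrel : (m * c - k) • x + (m * d - k) • y + (-k) • z = 0 := by
    linear_combination (norm := module) m • hcd + k • he
  simpa using Fintype.linearIndependent_iff.mp (hli.restrict_scalars' ℤ)
    ![m * c - k, m * d - k, -k] (by simpa [Fin.sum_univ_three] using hrel) 2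

namespace AsymmetricTableAlgebra

variable {A : Type*} [CommRing A] {u : ℕ} {b bs : A}

theorem b_mul_sum_eq (h1 : b * bs = ((2 * u + 1 : ℕ) : A) + (u : A) * b + (u : A) * bs)
    (h2 : b ^ 2 = (u : A) * b + ((u + 1 : ℕ) : A) * bs) :
    b * (1 + b + bs) = ((2 * u + 1 : ℕ) : A) * (1 + b + bs) := by
  push_cast at h1 h2 ⊢
  linear_combination h1 + h2

variable [Algebra ℚ A] {e₀ : A}

theorem order_zsmul_e₀_eq (he₀ : e₀ = ((4 * (u : ℚ) + 3)⁻¹) • (1 + b + bs)) :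
    (4 * (u : ℤ) + 3) • e₀ = 1 + b + bs := by
  have hn : (4 * (u : ℚ) + 3) ≠ 0 := by positivity
  rw [he₀, ← Int.cast_smul_eq_zsmul ℚ, smul_smul]
  push_cast
  rw [mul_inv_cancel₀ hn, one_smul]

theorem b_mul_e₀_eq (h1 : b * bs = ((2 * u + 1 : ℕ) : A) + (u : A) * b + (u : A) * bs)
    (h2 : b ^ 2 = (u : A) * b + ((u + 1 : ℕ) : A) * bs)
    (he₀ : e₀ = ((4 * (u : ℚ) + 3)⁻¹) • (1 + b + bs)) :
    b * e₀ = (2 * (u : ℤ) + 1) • e₀ := by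
  rw [he₀, mul_smul_comm, b_mul_sum_eq h1 h2, zsmul_eq_mul, ← mul_smul_comm]
  push_cast
  rfl

end AsymmetricTableAlgebra

theorem stmt3_general (A : Type*) [CommRing A] [Algebra ℚ A] (u : ℕ) (b bs : A)
    (h1 : b * bs = ((2 * u + 1 : ℕ) : A) + (u : A) * b + (u : A) * bs)
    (h2 : b ^ 2 = (u : A) * b + ((u + 1 : ℕ) : A) * bs)
    (hbasis : LinearIndependent ℚ ![(1 : A), b, bs])
    (e₀ e₁ : A)
    (he₀ : e₀ = ((4 * (u : ℚ) + 3)⁻¹) • (1 + b + bs))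
    (he₁ : e₁ = 1 - e₀)
    (L L₀ : Submodule ℤ A)
    (hL : L = Submodule.span ℤ {(1 : A), b, bs})
    (hL₀ : L₀ = Submodule.span ℤ {e₀, e₁, b * e₁}) :
    L = Submodule.span ℤ
        {((4 * (u : ℤ) + 3) : ℤ) • e₀, e₀ + e₁, ((2 * (u : ℤ) + 1) : ℤ) • e₀ + b * e₁} ∧
      Nat.card (L₀ ⧸ Submodule.comap L₀.subtype L) = 4 * u + 3 := by
  have hsum := AsymmetricTableAlgebra.order_zsmul_e₀_eq he₀
  have hbe₁ : b * e₁ = b - (2 * (u : ℤ) + 1) • e₀ := by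
    rw [he₁, mul_sub, mul_one, AsymmetricTableAlgebra.b_mul_e₀_eq h1 h2 he₀]
  have hL' : L = span ℤ {(4 * (u : ℤ) + 3) • e₀, 1, b} := by
    rw [hL]
    refine span_eq_span ?_ ?_ <;> simp only [Set.insert_subset_iff, Set.singleton_subset_iff]
    · exact ⟨mem_span_triple_of_eq 0 1 0 (by module), mem_span_triple_of_eq 0 0 1 (by module),
        mem_span_triple_of_eq 1 (-1) (-1) (by rw [hsum]; module)⟩
    · exact ⟨mem_span_triple_of_eq 1 1 1 (by rw [hsum]; module),
        mem_span_triple_of_eq 1 0 0 (by module), mem_span_triple_of_eq 0 1 0 (by module)⟩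
  have hL₀' : L₀ = span ℤ {e₀, 1, b} := by
    rw [hL₀, hbe₁, he₁]
    refine span_eq_span ?_ ?_ <;> simp only [Set.insert_subset_iff, Set.singleton_subset_iff]
    · exact ⟨mem_span_triple_of_eq 1 0 0 (by module), mem_span_triple_of_eq (-1) 1 0 (by module),
        mem_span_triple_of_eq (-(2 * (u : ℤ) + 1)) 0 1 (by module)⟩
    · exact ⟨mem_span_triple_of_eq 1 0 0 (by module), mem_span_triple_of_eq 1 1 0 (by module),
        mem_span_triple_of_eq (2 * (u : ℤ) + 1) 0 1 (by module)⟩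
  refine ⟨by rw [hL', hbe₁, he₁, add_sub_cancel, add_sub_cancel], ?_⟩
  rw [hL', hL₀', natCard_quotient_span_insert_zsmul
    (fun k hk => hbasis.eq_zero_of_zsmul_mem_span_pair hsum hk)]
  omega

/-- For the asymmetric rank-3 table algebra over `ℚ` of order `n = 4u+3`,
the lattice `ℤ·1 + ℤ·b + ℤ·b*` equals the `ℤ`-span of
`{n·e₀, e₀ + e₁, (2u+1)·e₀ + b·e₁}`, and its index in `ℤe₀ + ℤe₁ + ℤ(b·e₁)` is `n`. -/
theorem stmt3 (A : Type*) [CommRing A] [Algebra ℚ A] (u : ℕ) (b bs : A)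
    (h1 : b * bs = ((2 * u + 1 : ℕ) : A) + (u : A) * b + (u : A) * bs)
    (h1' : bs * b = ((2 * u + 1 : ℕ) : A) + (u : A) * b + (u : A) * bs)
    (h2 : b ^ 2 = (u : A) * b + ((u + 1 : ℕ) : A) * bs)
    (h3 : bs ^ 2 = ((u + 1 : ℕ) : A) * b + (u : A) * bs)
    (hbasis : LinearIndependent ℚ ![(1 : A), b, bs])
    (e₀ e₁ : A)
    (he₀ : e₀ = ((4 * (u : ℚ) + 3)⁻¹) • (1 + b + bs))
    (he₁ : e₁ = 1 - e₀)
    (L L₀ : Submodule ℤ A)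
    (hL : L = Submodule.span ℤ {(1 : A), b, bs})
    (hL₀ : L₀ = Submodule.span ℤ {e₀, e₁, b * e₁}) :
    L = Submodule.span ℤ
        {((4 * (u : ℤ) + 3) : ℤ) • e₀, e₀ + e₁, ((2 * (u : ℤ) + 1) : ℤ) • e₀ + b * e₁} ∧
      Nat.card (L₀ ⧸ Submodule.comap L₀.subtype L) = 4 * u + 3 :=
  stmt3_general A u b bs h1 h2 hbasis e₀ e₁ he₀ he₁ L L₀ hL hL₀
end

section
/- Let p be an odd prime, v coprime to p, π with π² = pv, R = ℤ_p[π], and let Λ = ⟨p^m π e₁, e₁ + e₀, p^{2m+1} e₀⟩ be the ℤ_p-lattice in ℤ_p e₀ ⊕ R e₁ (m ≥ 0). For parameters 0 ≤ i ≤ m, 0 ≤ j ≤ 2m+1, 0 ≤ r < p^{2m+1}, the ℤ_p-lattice M(r,i,j) = ⟨e₀+e₁, r·e₀ + pⁱπ e₁, p^j e₀⟩ satisfies Λ ⊆ M(r,i,j) and Λ·M(r,i,j) ⊆ M(r,i,j) if and only if: m + i + 1 ≥ j, and (r = 0 or m + v_p(r) ≥ i + j). -/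
/-!
Since `1` and `π` are `ℤ_p`-independent in `ℤ_p[π]`, an element `(s, x + yπ)` lies in
`M(r,i,j)` iff `y = d pⁱ` and `pʲ ∣ s - x - d r` for some `d`. Both conditions on `M` can be
tested on generators: `e₀ + e₁` is the identity and `p^{2m+1} e₀` only produces multiples of
`pʲ e₀`, so everything reduces to `pᵐπ e₁ ∈ M`, which is the valuation condition on `r`, and
`pᵐπ e₁ · (r e₀ + pⁱπ e₁) = p^{m+i+1} v e₁ ∈ M`, which is `j ≤ m + i + 1`.
-/

open Polynomial

namespace AdjoinRoot

variable {R : Type*} [CommRing R] {g : R[X]}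

theorem algebraMap_add_algebraMap_mul_root_eq_zero_iff (hg : g.Monic) (hdeg : 1 < g.natDegree)
    {x y : R} :
    algebraMap R (AdjoinRoot g) x + algebraMap R (AdjoinRoot g) y * root g = 0 ↔
      x = 0 ∧ y = 0 := by
  refine ⟨fun h => ?_, by rintro ⟨rfl, rfl⟩; simp⟩
  have hmk : algebraMap R (AdjoinRoot g) x + algebraMap R (AdjoinRoot g) y * root g =
      mk g (C y * X + C x) := by
    simp only [map_add, map_mul, mk_C, mk_X, algebraMap_eq]; ring
  by_contra hne
  have hlin : C y * X + C x ≠ 0 := fun h0 =>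
    hne ⟨by simpa using congrArg (coeff · 0) h0, by simpa using congrArg (coeff · 1) h0⟩
  exact mk_ne_zero_of_natDegree_lt hg hlin (natDegree_linear_le.trans_lt hdeg) (hmk ▸ h)

theorem algebraMap_add_algebraMap_mul_root_inj (hg : g.Monic) (hdeg : 1 < g.natDegree)
    {x y x' y' : R} :
    algebraMap R (AdjoinRoot g) x + algebraMap R (AdjoinRoot g) y * root g =
        algebraMap R (AdjoinRoot g) x' + algebraMap R (AdjoinRoot g) y' * root g ↔
      x = x' ∧ y = y' := by
  rw [← sub_eq_zero, ← sub_eq_zero (a := x), ← sub_eq_zero (a := y),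
    ← algebraMap_add_algebraMap_mul_root_eq_zero_iff hg hdeg, map_sub, map_sub]
  ring_nf

theorem mk_mem_span_triple_iff (hg : g.Monic) (hdeg : 1 < g.natDegree)
    {r b c s x y : R} :
    (s, algebraMap R (AdjoinRoot g) x + algebraMap R (AdjoinRoot g) y * root g) ∈
        Submodule.span R {(1, 1), (r, algebraMap R (AdjoinRoot g) b * root g), (c, 0)} ↔
      ∃ d, y = d * b ∧ c ∣ s - x - d * r := by
  rw [Submodule.mem_span_triple]
  simp only [Prod.smul_mk, Prod.mk_add_mk, Prod.mk.injEq, smul_eq_mul, mul_one, smul_zero,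
    add_zero]
  simp only [Algebra.smul_def, mul_one, ← mul_assoc, ← map_mul,
    algebraMap_add_algebraMap_mul_root_inj hg hdeg]
  constructor
  · rintro ⟨a, d, e, hs, rfl, rfl⟩
    exact ⟨d, rfl, e, by rw [← hs]; ring⟩
  · rintro ⟨d, rfl, e, he⟩
    exact ⟨x, d, e, by linear_combination -he, rfl, rfl⟩

theorem root_mul_self_of_X_sq_sub_C (a : R) :
    root (X ^ 2 - C a) * root (X ^ 2 - C a) = algebraMap R _ a := by
  have h := eval₂_root (X ^ 2 - C a)
  rw [eval₂_sub, eval₂_pow, eval₂_X, eval₂_C, sub_eq_zero] at h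
  rw [← sq, h, algebraMap_eq]

end AdjoinRoot

theorem Submodule.span_le_and_mul_mem_iff {R A : Type*} [CommSemiring R] [Semiring A]
    [Algebra R A] (S T : Set A) :
    (span R S ≤ span R T ∧ ∀ x ∈ span R S, ∀ y ∈ span R T, x * y ∈ span R T) ↔
      S ⊆ span R T ∧ ∀ x ∈ S, ∀ y ∈ T, x * y ∈ span R T := by
  rw [span_le, ← mul_le, span_mul_span, span_le, Set.mul_subset_iff]
  rfl

theorem PadicInt.pow_p_dvd_natCast_iff {p : ℕ} [Fact p.Prime] (n k : ℕ) :
    (p : ℤ_[p]) ^ n ∣ (k : ℤ_[p]) ↔ p ^ n ∣ k := by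
  exact_mod_cast PadicInt.pow_p_dvd_int_iff n k

theorem pow_dvd_pow_mul_iff_le_add_padicValNat {p : ℕ} [Fact p.Prime] {j k r : ℕ} :
    p ^ j ∣ p ^ k * r ↔ r = 0 ∨ j ≤ k + padicValNat p r := by
  rcases eq_or_ne r 0 with rfl | hr
  · simp
  · have hp : p ≠ 0 := (Fact.out : p.Prime).ne_zero
    rw [padicValNat_dvd_iff_le (by positivity), padicValNat.mul (by positivity) hr,
      padicValNat.prime_pow, or_iff_right hr]

section Lattice

variable {p : ℕ} [Fact p.Prime] {v : ℤ_[p]} {m r i j : ℕ}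

local notation "𝒪" => AdjoinRoot (X ^ 2 - C ((p : ℤ_[p]) * v))

variable (p v) in
/-- The generators of `M(r,i,j)`. -/
def latticeGens (r i j : ℕ) : Set (ℤ_[p] × 𝒪) :=
  {(1, 1), ((r : ℤ_[p]), (p : 𝒪) ^ i * AdjoinRoot.root _), ((p : ℤ_[p]) ^ j, 0)}

variable (p v) in
/-- The generators of `Λ`. -/
def orderGens (m : ℕ) : Set (ℤ_[p] × 𝒪) :=
  {(0, (p : 𝒪) ^ m * AdjoinRoot.root _), (1, 1), ((p : ℤ_[p]) ^ (2 * m + 1), 0)}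

theorem mk_mem_span_latticeGens_iff {s x y : ℤ_[p]} :
    (s, algebraMap ℤ_[p] 𝒪 x + algebraMap ℤ_[p] 𝒪 y * AdjoinRoot.root _) ∈
        Submodule.span ℤ_[p] (latticeGens p v r i j) ↔
      ∃ d, y = d * (p : ℤ_[p]) ^ i ∧ (p : ℤ_[p]) ^ j ∣ s - x - d * r := by
  have hpi : (p : 𝒪) ^ i = algebraMap ℤ_[p] 𝒪 ((p : ℤ_[p]) ^ i) := by simp
  rw [latticeGens, hpi]
  exact AdjoinRoot.mk_mem_span_triple_iff (monic_X_pow_sub_C _ two_ne_zero)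
    (by rw [natDegree_X_pow_sub_C]; norm_num)

theorem mk_zero_mem_span_latticeGens {s : ℤ_[p]} (hs : (p : ℤ_[p]) ^ j ∣ s) :
    (s, 0) ∈ Submodule.span ℤ_[p] (latticeGens p v r i j) := by
  obtain ⟨t, rfl⟩ := hs
  have h : ((p : ℤ_[p]) ^ j * t, (0 : 𝒪)) = t • ((p : ℤ_[p]) ^ j, 0) := by
    simp [mul_comm]
  exact h ▸ Submodule.smul_mem _ t (Submodule.subset_span (by simp [latticeGens]))

theorem mk_pow_mul_root_mem_span_latticeGens_iff (hi : i ≤ m) :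
    ((0 : ℤ_[p]), (p : 𝒪) ^ m * AdjoinRoot.root _) ∈
        Submodule.span ℤ_[p] (latticeGens p v r i j) ↔
      r = 0 ∨ i + j ≤ m + padicValNat p r := by
  have hpm : ((0 : ℤ_[p]), (p : 𝒪) ^ m * AdjoinRoot.root _) =
      (0, algebraMap ℤ_[p] 𝒪 0 + algebraMap ℤ_[p] 𝒪 ((p : ℤ_[p]) ^ (m - i) * p ^ i) *
        AdjoinRoot.root _) := by
    rw [← pow_add, Nat.sub_add_cancel hi]; simp
  have hcancel : ∀ d : ℤ_[p], (p : ℤ_[p]) ^ (m - i) * p ^ i = d * p ^ i ↔ d = p ^ (m - i) :=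
    fun d => (mul_left_inj' (pow_ne_zero _ PadicInt.prime_p.ne_zero)).trans eq_comm
  simp only [hpm, mk_mem_span_latticeGens_iff, hcancel, exists_eq_left, zero_sub, sub_zero,
    dvd_neg]
  have hcast : (p : ℤ_[p]) ^ (m - i) * r = ((p ^ (m - i) * r : ℕ) : ℤ_[p]) := by push_cast; rfl
  rw [hcast, PadicInt.pow_p_dvd_natCast_iff,
    pow_dvd_pow_mul_iff_le_add_padicValNat]
  omega

theorem mk_pow_mul_root_mul_mem_span_latticeGens_iff (hv : IsUnit v) :
    ((0 : ℤ_[p]), (p : 𝒪) ^ m * AdjoinRoot.root _) *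
          ((r : ℤ_[p]), (p : 𝒪) ^ i * AdjoinRoot.root _) ∈
        Submodule.span ℤ_[p] (latticeGens p v r i j) ↔
      j ≤ m + i + 1 := by
  have hprod : ((0 : ℤ_[p]), (p : 𝒪) ^ m * AdjoinRoot.root _) *
        ((r : ℤ_[p]), (p : 𝒪) ^ i * AdjoinRoot.root _) =
      (0, algebraMap ℤ_[p] 𝒪 ((p : ℤ_[p]) ^ (m + i + 1) * v) +
        algebraMap ℤ_[p] 𝒪 0 * AdjoinRoot.root _) := by
    rw [Prod.mk_mul_mk, zero_mul, map_zero, zero_mul, add_zero]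
    congr 1
    calc (p : 𝒪) ^ m * AdjoinRoot.root _ * ((p : 𝒪) ^ i * AdjoinRoot.root _)
        = (p : 𝒪) ^ (m + i) * (AdjoinRoot.root _ * AdjoinRoot.root _) := by ring
      _ = _ := by rw [AdjoinRoot.root_mul_self_of_X_sq_sub_C]; simp; ring
  have hzero : ∀ d : ℤ_[p], 0 = d * (p : ℤ_[p]) ^ i ↔ d = 0 := fun d => by
    simp [eq_comm (a := (0 : ℤ_[p])), PadicInt.prime_p.ne_zero]
  simp only [hprod, mk_mem_span_latticeGens_iff, hzero, exists_eq_left, zero_mul, sub_zero,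
    zero_sub, dvd_neg, hv.dvd_mul_right]
  exact pow_dvd_pow_iff PadicInt.prime_p.ne_zero PadicInt.prime_p.not_isUnit

theorem orderGens_subset_and_mul_mem (hj : j ≤ 2 * m + 1)
    (h₁ : ((0 : ℤ_[p]), (p : 𝒪) ^ m * AdjoinRoot.root _) ∈
      Submodule.span ℤ_[p] (latticeGens p v r i j))
    (h₂ : ((0 : ℤ_[p]), (p : 𝒪) ^ m * AdjoinRoot.root _) *
        ((r : ℤ_[p]), (p : 𝒪) ^ i * AdjoinRoot.root _) ∈
      Submodule.span ℤ_[p] (latticeGens p v r i j)) :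
    orderGens p v m ⊆ Submodule.span ℤ_[p] (latticeGens p v r i j) ∧
      ∀ x ∈ orderGens p v m, ∀ y ∈ latticeGens p v r i j,
        x * y ∈ Submodule.span ℤ_[p] (latticeGens p v r i j) := by
  have hone : ((1 : ℤ_[p]), (1 : 𝒪)) ∈ Submodule.span ℤ_[p] (latticeGens p v r i j) :=
    Submodule.subset_span (by simp [latticeGens])
  have hconst : ((p : ℤ_[p]) ^ (2 * m + 1), (0 : 𝒪)) ∈
      Submodule.span ℤ_[p] (latticeGens p v r i j) :=
    mk_zero_mem_span_latticeGens (pow_dvd_pow _ hj)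
  refine ⟨?_, ?_⟩
  · simp only [orderGens, Set.insert_subset_iff, Set.singleton_subset_iff]
    exact ⟨h₁, hone, hconst⟩
  · simp only [orderGens, Set.mem_insert_iff, Set.mem_singleton_iff, forall_eq_or_imp, forall_eq]
    refine ⟨fun y hy => ?_, fun y hy => ?_, fun y hy => ?_⟩
    · simp only [latticeGens, Set.mem_insert_iff, Set.mem_singleton_iff] at hy
      rcases hy with rfl | rfl | rfl
      · simpa using h₁
      · exact h₂
      · simp [Prod.mk_zero_zero]
    · rw [Prod.mk_one_one, one_mul]
      exact Submodule.subset_span hy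
    · simp only [latticeGens, Set.mem_insert_iff, Set.mem_singleton_iff] at hy
      rcases hy with rfl | rfl | rfl
      · simpa using hconst
      · simpa using mk_zero_mem_span_latticeGens (dvd_mul_of_dvd_left (pow_dvd_pow _ hj) _)
      · simpa using mk_zero_mem_span_latticeGens (dvd_mul_left _ _)

end Lattice

theorem stmt17_general (p : ℕ) [Fact p.Prime] (v : ℤ_[p]) (hv : IsUnit v)
    (π : AdjoinRoot (X ^ 2 - C ((p : ℤ_[p]) * v)))
    (hπ : π = AdjoinRoot.root _)
    (m : ℕ)
    (Λ : Submodule ℤ_[p] (ℤ_[p] × AdjoinRoot (X ^ 2 - C ((p : ℤ_[p]) * v))))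
    (hΛ : Λ = Submodule.span ℤ_[p]
      {((0 : ℤ_[p]), (p : AdjoinRoot (X ^ 2 - C ((p : ℤ_[p]) * v))) ^ m * π),
       ((1 : ℤ_[p]), (1 : AdjoinRoot (X ^ 2 - C ((p : ℤ_[p]) * v)))),
       ((p : ℤ_[p]) ^ (2 * m + 1), (0 : AdjoinRoot (X ^ 2 - C ((p : ℤ_[p]) * v))))})
    (i j r : ℕ) (hi : i ≤ m) (hj : j ≤ 2 * m + 1)
    (M : Submodule ℤ_[p] (ℤ_[p] × AdjoinRoot (X ^ 2 - C ((p : ℤ_[p]) * v))))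
    (hM : M = Submodule.span ℤ_[p]
      {((1 : ℤ_[p]), (1 : AdjoinRoot (X ^ 2 - C ((p : ℤ_[p]) * v)))),
       ((r : ℤ_[p]), (p : AdjoinRoot (X ^ 2 - C ((p : ℤ_[p]) * v))) ^ i * π),
       ((p : ℤ_[p]) ^ j, (0 : AdjoinRoot (X ^ 2 - C ((p : ℤ_[p]) * v))))}) :
    (Λ ≤ M ∧ ∀ x ∈ Λ, ∀ y ∈ M, x * y ∈ M) ↔
      (j ≤ m + i + 1 ∧ (r = 0 ∨ i + j ≤ m + padicValNat p r)) := by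
  subst hπ hΛ hM
  have hg₁ := mk_pow_mul_root_mem_span_latticeGens_iff (v := v) (r := r) (j := j) hi
  have hg₁g₂ := mk_pow_mul_root_mul_mem_span_latticeGens_iff (m := m) (r := r) (i := i) (j := j) hv
  refine (Submodule.span_le_and_mul_mem_iff (orderGens p v m) (latticeGens p v r i j)).trans
    ⟨?_, ?_⟩
  · rintro ⟨hsub, hmul⟩
    exact ⟨hg₁g₂.1 (hmul _ (by simp [orderGens]) _ (by simp [latticeGens])),
      hg₁.1 (hsub (by simp [orderGens]))⟩
  · rintro ⟨hji, hr⟩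
    exact orderGens_subset_and_mul_mem hj (hg₁.2 hr) (hg₁g₂.2 hji)

/-- Let `p` be an odd prime, `v ∈ ℤ_p×`, `π` with `π² = pv`, and
`R = ℤ_p[π]` (modeled as `AdjoinRoot (X² - pv)`).  Inside `Λ₀ = ℤ_p e₀ ⊕ R e₁`
(identified with `ℤ_p × R`), let `Λ = ⟨pᵐ π e₁, e₀ + e₁, p^{2m+1} e₀⟩`.  For
`0 ≤ i ≤ m`, `0 ≤ j ≤ 2m+1`, `0 ≤ r < p^{2m+1}`, the `ℤ_p`-lattice
`M(r,i,j) = ⟨e₀ + e₁, r·e₀ + pⁱπ e₁, p^j e₀⟩` satisfies `Λ ⊆ M(r,i,j)` and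
`Λ·M(r,i,j) ⊆ M(r,i,j)` if and only if `m + i + 1 ≥ j` and
(`r = 0` or `m + v_p(r) ≥ i + j`). -/
theorem stmt17 (p : ℕ) [Fact p.Prime] (hodd : Odd p) (v : ℤ_[p]) (hv : IsUnit v)
    (π : AdjoinRoot (X ^ 2 - C ((p : ℤ_[p]) * v)))
    (hπ : π = AdjoinRoot.root _)
    (m : ℕ)
    (Λ : Submodule ℤ_[p] (ℤ_[p] × AdjoinRoot (X ^ 2 - C ((p : ℤ_[p]) * v))))
    (hΛ : Λ = Submodule.span ℤ_[p]
      {((0 : ℤ_[p]), (p : AdjoinRoot (X ^ 2 - C ((p : ℤ_[p]) * v))) ^ m * π),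
       ((1 : ℤ_[p]), (1 : AdjoinRoot (X ^ 2 - C ((p : ℤ_[p]) * v)))),
       ((p : ℤ_[p]) ^ (2 * m + 1), (0 : AdjoinRoot (X ^ 2 - C ((p : ℤ_[p]) * v))))})
    (i j r : ℕ) (hi : i ≤ m) (hj : j ≤ 2 * m + 1) (hr : r < p ^ (2 * m + 1))
    (M : Submodule ℤ_[p] (ℤ_[p] × AdjoinRoot (X ^ 2 - C ((p : ℤ_[p]) * v))))
    (hM : M = Submodule.span ℤ_[p]
      {((1 : ℤ_[p]), (1 : AdjoinRoot (X ^ 2 - C ((p : ℤ_[p]) * v)))),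
       ((r : ℤ_[p]), (p : AdjoinRoot (X ^ 2 - C ((p : ℤ_[p]) * v))) ^ i * π),
       ((p : ℤ_[p]) ^ j, (0 : AdjoinRoot (X ^ 2 - C ((p : ℤ_[p]) * v))))}) :
    (Λ ≤ M ∧ ∀ x ∈ Λ, ∀ y ∈ M, x * y ∈ M) ↔
      (j ≤ m + i + 1 ∧ (r = 0 ∨ i + j ≤ m + padicValNat p r)) :=
  stmt17_general p v hv π hπ m Λ hΛ i j r hi hj M hM
end

section
/- For the fusion ring ℤ𝔅 of Rep(S₃), with basis {1, b, d} and relations b² = 1, bd = db = d, d² = 1 + b + d, the primitive idempotents of ℚ𝔅 are e_δ = (1/6)(1 + b + 2d), e_ψ = (1/3)(1 + b - d), e_φ = (1/2)(1 - b): these are pairwise orthogonal idempotents summing to 1, and ℤ𝔅 = ℤ·1 + 2ℤ(e_δ + e_ψ) + 3ℤ·e_ψ, which has index 6 in the maximal order ℤe_δ ⊕ ℤe_ψ ⊕ ℤe_φ. -/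
/-!
Each idempotent has the form `q⁻¹ • x` with `x * x = q • x`, which the relations give directly.
For the index: `e_ψ ≡ 2 e_δ` and `e_φ ≡ -3 e_δ` modulo `ℤ𝔅`, so `L₀ / (L₀ ∩ ℤ𝔅)` is cyclic,
generated by `e_δ`. The character table is an algebra map `ℚ𝔅 → ℚ³` sending `e_δ` to
`(1, 0, 0)` and `1, b, d` to `(1, 1, 1)`, `(1, 1, -1)`, `(2, -1, 0)`; comparing coordinates
shows that `k • e_δ ∈ ℤ𝔅` exactly when `6 ∣ k`.
-/

theorem isIdempotentElem_inv_smul {K A : Type*} [Field K] [Ring A] [Algebra K A] {q : K}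
    (hq : q ≠ 0) {x : A} (hx : x * x = q • x) : IsIdempotentElem (q⁻¹ • x) := by
  rw [IsIdempotentElem, smul_mul_smul_comm, hx, smul_smul, mul_assoc, inv_mul_cancel₀ hq,
    mul_one]

namespace Submodule

theorem span_triple_eq_span_add {R M : Type*} [Ring R] [AddCommGroup M] [Module R M]
    (x y z : M) : span R {x, y, z} = span R {x, x + y, x + y - z} := by
  have hx : x ∈ span R {x, x + y, x + y - z} := subset_span (by simp)
  have hxy : x + y ∈ span R {x, x + y, x + y - z} := subset_span (by simp)
  have hxyz : x + y - z ∈ span R {x, x + y, x + y - z} := subset_span (by simp)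
  have hx' : x ∈ span R {x, y, z} := subset_span (by simp)
  have hy' : y ∈ span R {x, y, z} := subset_span (by simp)
  have hz' : z ∈ span R {x, y, z} := subset_span (by simp)
  apply le_antisymm <;>
    simp only [span_le, Set.insert_subset_iff, Set.singleton_subset_iff, SetLike.mem_coe]
  · exact ⟨hx, by simpa using sub_mem hxy hx, by simpa using sub_mem hxy hxyz⟩
  · exact ⟨hx', add_mem hx' hy', sub_mem (add_mem hx' hy') hz'⟩

theorem natCard_quotient_comap_eq {M : Type*} [AddCommGroup M] {L L₀ : Submodule ℤ M}
    {x : M} (hx : x ∈ L₀) (hgen : L₀ ≤ L ⊔ ℤ ∙ x) (n : ℕ)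
    (hord : ∀ k : ℤ, k • x ∈ L ↔ (n : ℤ) ∣ k) :
    Nat.card (L₀ ⧸ L.comap L₀.subtype) = n := by
  set K := L.comap L₀.subtype
  let f : ℤ →ₗ[ℤ] L₀ ⧸ K := K.mkQ ∘ₗ LinearMap.toSpanSingleton ℤ L₀ ⟨x, hx⟩
  have hf : ∀ k : ℤ, f k = 0 ↔ k • x ∈ L := fun k => by
    simp [f, K, Quotient.mk_eq_zero]
  have hsurj : Function.Surjective f := by
    rintro ⟨y, hy⟩
    obtain ⟨l, hl, _, hkx, hlk⟩ := mem_sup.mp (hgen hy)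
    obtain ⟨k, rfl⟩ := mem_span_singleton.mp hkx
    refine ⟨k, (Quotient.eq K).mpr ?_⟩
    simpa [K, ← hlk] using neg_mem hl
  have hker : LinearMap.ker f = span ℤ {(n : ℤ)} := by
    ext k
    rw [LinearMap.mem_ker, hf, hord, mem_span_singleton, dvd_iff_exists_eq_mul_left]
    simp [eq_comm]
  rw [← Nat.card_congr (f.quotKerEquivOfSurjective hsurj).toEquiv, hker,
    Nat.card_congr (Int.quotientSpanNatEquivZMod n).toEquiv, Nat.card_zmod]

end Submodule

namespace RepS3

open Submodule

structure IsFusionPair {A : Type*} [Semiring A] (b d : A) : Prop where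
  b_mul_b : b * b = 1
  b_mul_d : b * d = d
  d_mul_d : d * d = 1 + b + d

theorem isFusionPair_characterTable :
    IsFusionPair (![1, 1, -1] : Fin 3 → ℚ) ![2, -1, 0] := by
  constructor <;> ext i <;> fin_cases i <;>
    simp only [Pi.add_apply, Pi.mul_apply, Pi.one_apply] <;> norm_num

section FusionAlgebra

variable {A : Type*} [CommRing A] [Algebra ℚ A]

def eδ (b d : A) : A := (6 : ℚ)⁻¹ • (1 + b + 2 * d)

def eψ (b d : A) : A := (3 : ℚ)⁻¹ • (1 + b - d)

def eφ (b : A) : A := (2 : ℚ)⁻¹ • (1 - b)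

variable {b d : A}

theorem eδ_add_eψ_add_eφ : eδ b d + eψ b d + eφ b = 1 := by
  simp only [eδ, eψ, eφ, two_mul]
  module

namespace IsFusionPair

variable (h : IsFusionPair b d)
include h

theorem eδ_mul_eψ : eδ b d * eψ b d = 0 := by
  have : (1 + b + 2 * d) * (1 + b - d) = 0 := by
    linear_combination h.b_mul_b + h.b_mul_d - 2 * h.d_mul_d
  rw [eδ, eψ, smul_mul_smul_comm, this, smul_zero]

theorem eδ_mul_eφ : eδ b d * eφ b = 0 := by
  have : (1 + b + 2 * d) * (1 - b) = 0 := by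
    linear_combination -h.b_mul_b - 2 * h.b_mul_d
  rw [eδ, eφ, smul_mul_smul_comm, this, smul_zero]

theorem eψ_mul_eφ : eψ b d * eφ b = 0 := by
  have : (1 + b - d) * (1 - b) = 0 := by
    linear_combination -h.b_mul_b + h.b_mul_d
  rw [eψ, eφ, smul_mul_smul_comm, this, smul_zero]

theorem isIdempotentElem_eδ : IsIdempotentElem (eδ b d) := by
  refine isIdempotentElem_inv_smul (by norm_num) ?_
  rw [ofNat_smul_eq_nsmul ℚ, nsmul_eq_mul]
  linear_combination h.b_mul_b + 4 * h.d_mul_d + 4 * h.b_mul_d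

theorem isIdempotentElem_eψ : IsIdempotentElem (eψ b d) := by
  refine isIdempotentElem_inv_smul (by norm_num) ?_
  rw [ofNat_smul_eq_nsmul ℚ, nsmul_eq_mul]
  linear_combination h.b_mul_b + h.d_mul_d - 2 * h.b_mul_d

theorem isIdempotentElem_eφ : IsIdempotentElem (eφ b) := by
  refine isIdempotentElem_inv_smul (by norm_num) ?_
  rw [ofNat_smul_eq_nsmul ℚ, nsmul_eq_mul]
  linear_combination h.b_mul_b

end IsFusionPair

theorem two_zsmul_eδ_add_eψ : (2 : ℤ) • (eδ b d + eψ b d) = 1 + b := by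
  simp only [eδ, eψ, two_mul, ← Int.cast_smul_eq_zsmul ℚ]
  module

theorem three_zsmul_eψ : (3 : ℤ) • eψ b d = 1 + b - d := by
  rw [eψ, ← Int.cast_smul_eq_zsmul ℚ, smul_smul]
  norm_num

theorem six_zsmul_eδ : (6 : ℤ) • eδ b d = 1 + b + 2 * d := by
  rw [eδ, ← Int.cast_smul_eq_zsmul ℚ, smul_smul]
  norm_num

theorem eψ_eq : eψ b d = -d + (2 : ℤ) • eδ b d := by
  simp only [eδ, eψ, two_mul, ← Int.cast_smul_eq_zsmul ℚ]
  module

theorem eφ_eq : eφ b = (1 + d) + (-3 : ℤ) • eδ b d := by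
  simp only [eδ, eφ, two_mul, ← Int.cast_smul_eq_zsmul ℚ]
  module

theorem span_one_b_d_eq :
    span ℤ {1, b, d} = span ℤ {1, (2 : ℤ) • (eδ b d + eψ b d), (3 : ℤ) • eψ b d} := by
  rw [two_zsmul_eδ_add_eψ, three_zsmul_eψ]
  exact span_triple_eq_span_add 1 b d

theorem span_eδ_eψ_eφ_le :
    span ℤ {eδ b d, eψ b d, eφ b} ≤ span ℤ {1, b, d} ⊔ ℤ ∙ eδ b d := by
  have hδ : eδ b d ∈ ℤ ∙ eδ b d := mem_span_singleton_self _
  have h1 : (1 : A) ∈ span ℤ {1, b, d} := subset_span (by simp)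
  have hd : d ∈ span ℤ {1, b, d} := subset_span (by simp)
  simp only [span_le, Set.insert_subset_iff, Set.singleton_subset_iff, SetLike.mem_coe]
  refine ⟨mem_sup_right hδ, ?_, ?_⟩
  · rw [eψ_eq]
    exact add_mem_sup (neg_mem hd) (smul_mem _ _ hδ)
  · rw [eφ_eq]
    exact add_mem_sup (add_mem h1 hd) (smul_mem _ _ hδ)

section CharacterTable

variable (χ : A →ₐ[ℚ] Fin 3 → ℚ) (hb : χ b = ![1, 1, -1]) (hd : χ d = ![2, -1, 0])
include hb hd

theorem algHom_eδ : χ (eδ b d) = ![1, 0, 0] := by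
  rw [eδ, map_smul, map_add, map_add, map_mul, map_one, map_ofNat, hb, hd]
  ext i
  fin_cases i <;>
    simp only [Pi.smul_apply, Pi.add_apply, Pi.mul_apply, Pi.ofNat_apply] <;> norm_num

theorem zsmul_eδ_mem_span_iff (k : ℤ) :
    k • eδ b d ∈ span ℤ {1, b, d} ↔ (6 : ℤ) ∣ k := by
  constructor
  · intro hk
    obtain ⟨a, _, hz, hsum⟩ := mem_span_insert.mp hk
    obtain ⟨c, e, rfl⟩ := mem_span_pair.mp hz
    have hχ := congrArg χ hsum
    simp only [map_zsmul, map_add, map_one, algHom_eδ χ hb hd, hb, hd] at hχ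
    have h0 : (k : ℚ) = a + (c + e * 2) := by simpa using congrFun hχ 0
    have h1 : (0 : ℚ) = a + (c - e) := by simpa [sub_eq_add_neg] using congrFun hχ 1
    have h2 : (0 : ℚ) = a - c := by simpa [sub_eq_add_neg] using congrFun hχ 2
    have hk6 : (k : ℚ) = 6 * a := by linarith
    exact ⟨a, by exact_mod_cast hk6⟩
  · rintro ⟨a, rfl⟩
    have h2d : 2 * d = (2 : ℤ) • d := by rw [two_mul, two_zsmul]
    rw [mul_comm, mul_smul, six_zsmul_eδ, h2d]
    refine smul_mem _ _ (add_mem (add_mem ?_ ?_) (smul_mem _ _ ?_)) <;>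
      exact subset_span (by simp)

theorem natCard_span_idempotents_quotient :
    Nat.card (span ℤ {eδ b d, eψ b d, eφ b} ⧸
      (span ℤ {1, b, d}).comap (span ℤ {eδ b d, eψ b d, eφ b}).subtype) = 6 :=
  natCard_quotient_comap_eq (subset_span (by simp)) span_eδ_eψ_eφ_le 6
    (zsmul_eδ_mem_span_iff χ hb hd)

end CharacterTable

end FusionAlgebra

section Presentation

open MvPolynomial

variable (R : Type*) [CommRing R]

noncomputable def relIdeal : Ideal (MvPolynomial (Fin 2) R) :=
  Ideal.span {X 0 ^ 2 - 1, X 0 * X 1 - X 1, X 1 ^ 2 - (1 + X 0 + X 1)}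

theorem isFusionPair_mk :
    IsFusionPair (Ideal.Quotient.mk (relIdeal R) (X 0)) (Ideal.Quotient.mk (relIdeal R) (X 1)) where
  b_mul_b := by
    rw [← map_mul, ← map_one (Ideal.Quotient.mk _), Ideal.Quotient.eq, ← sq]
    exact Ideal.subset_span (by simp)
  b_mul_d := by
    rw [← map_mul, Ideal.Quotient.eq]
    exact Ideal.subset_span (by simp)
  d_mul_d := by
    rw [← map_mul, ← map_one (Ideal.Quotient.mk _), ← map_add, ← map_add, Ideal.Quotient.eq, ← sq]
    exact Ideal.subset_span (by simp)

variable {R}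

theorem exists_algHom_mk {B : Type*} [CommRing B] [Algebra R B] {β δ : B}
    (h : IsFusionPair β δ) :
    ∃ χ : MvPolynomial (Fin 2) R ⧸ relIdeal R →ₐ[R] B,
      χ (Ideal.Quotient.mk _ (X 0)) = β ∧ χ (Ideal.Quotient.mk _ (X 1)) = δ := by
  have hle : relIdeal R ≤ RingHom.ker (aeval ![β, δ]) := by
    simp [relIdeal, Ideal.span_le, Set.insert_subset_iff, sq, h.b_mul_b, h.b_mul_d, h.d_mul_d]
  exact ⟨Ideal.Quotient.liftₐ _ (aeval ![β, δ]) fun _ ha => RingHom.mem_ker.mp (hle ha),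
    (Ideal.Quotient.liftₐ_apply ..).trans (aeval_X _ 0),
    (Ideal.Quotient.liftₐ_apply ..).trans (aeval_X _ 1)⟩

end Presentation

end RepS3

/-- For the fusion ring of `Rep(S₃)`, presented by generators `b, d` with
relations `b² = 1`, `bd = d`, `d² = 1 + b + d`, the primitive idempotents of `ℚ𝔅` are
`e_δ = (1/6)(1 + b + 2d)`, `e_ψ = (1/3)(1 + b - d)`, `e_φ = (1/2)(1 - b)`: pairwise
orthogonal idempotents summing to `1`; moreover `ℤ𝔅 = ℤ·1 + 2ℤ(e_δ+e_ψ) + 3ℤ·e_ψ`,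
which has index `6` in the maximal order `ℤe_δ ⊕ ℤe_ψ ⊕ ℤe_φ`. -/
theorem stmt19
    (I : Ideal (MvPolynomial (Fin 2) ℚ))
    (hI : I = Ideal.span {MvPolynomial.X 0 ^ 2 - 1,
      MvPolynomial.X 0 * MvPolynomial.X 1 - MvPolynomial.X 1,
      MvPolynomial.X 1 ^ 2 - (1 + MvPolynomial.X 0 + MvPolynomial.X 1)})
    (b d : MvPolynomial (Fin 2) ℚ ⧸ I)
    (hb : b = Ideal.Quotient.mk I (MvPolynomial.X 0))
    (hd : d = Ideal.Quotient.mk I (MvPolynomial.X 1))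
    (eδ eψ eφ : MvPolynomial (Fin 2) ℚ ⧸ I)
    (heδ : eδ = ((6 : ℚ)⁻¹) • (1 + b + 2 * d))
    (heψ : eψ = ((3 : ℚ)⁻¹) • (1 + b - d))
    (heφ : eφ = ((2 : ℚ)⁻¹) • (1 - b))
    (L L₀ : Submodule ℤ (MvPolynomial (Fin 2) ℚ ⧸ I))
    (hL : L = Submodule.span ℤ {(1 : MvPolynomial (Fin 2) ℚ ⧸ I), b, d})
    (hL₀ : L₀ = Submodule.span ℤ {eδ, eψ, eφ}) :
    eδ + eψ + eφ = 1 ∧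
      eδ * eψ = 0 ∧ eδ * eφ = 0 ∧ eψ * eφ = 0 ∧
      eδ ^ 2 = eδ ∧ eψ ^ 2 = eψ ∧ eφ ^ 2 = eφ ∧
      L = Submodule.span ℤ
        {(1 : MvPolynomial (Fin 2) ℚ ⧸ I), (2 : ℤ) • (eδ + eψ), (3 : ℤ) • eψ} ∧
      Nat.card (L₀ ⧸ Submodule.comap L₀.subtype L) = 6 := by
  obtain rfl : I = RepS3.relIdeal ℚ := hI
  have hpair := RepS3.isFusionPair_mk ℚ
  obtain ⟨χ, hχb, hχd⟩ := RepS3.exists_algHom_mk (R := ℚ) RepS3.isFusionPair_characterTable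
  rw [← hb] at hpair hχb
  rw [← hd] at hpair hχd
  obtain rfl : eδ = RepS3.eδ b d := heδ
  obtain rfl : eψ = RepS3.eψ b d := heψ
  obtain rfl : eφ = RepS3.eφ b := heφ
  subst hL hL₀
  exact ⟨RepS3.eδ_add_eψ_add_eφ, hpair.eδ_mul_eψ, hpair.eδ_mul_eφ, hpair.eψ_mul_eφ,
    hpair.isIdempotentElem_eδ.pow_succ_eq 1, hpair.isIdempotentElem_eψ.pow_succ_eq 1,
    hpair.isIdempotentElem_eφ.pow_succ_eq 1, RepS3.span_one_b_d_eq,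
    RepS3.natCard_span_idempotents_quotient χ hχb hχd⟩
end
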